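/- arXiv:2511.03557 — 3 statements merged into one kernel-verified Lean document; each statement's English description precedes it below -/
import Mathlib

section
/- For any finite poset P, the number of k-dimensional simplex faces of the chain polytope C(P) containing the origin is at most the number of k-dimensional simplex faces of the order polytope O(P) containing the origin, for every k ≥ 0. -/
open Set

variable {E : Type*} [AddCommGroup E] [Module ℝ E]

/-- A polytope: the convex hull of a finite set of points. -/
def IsPolytope (P : Set E) : Prop := ∃ S : Finset E, P = convexHull ℝ (S : Set E)

open Classical in
/-- Dimension of a polytope: `-1` for the empty set, else the dimension of its affine span. -/
noncomputable def polyDim (P : Set E) : ℤ :=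
  if P = ∅ then -1 else (Module.finrank ℝ (vectorSpan ℝ P) : ℤ)

/-- Number of vertices (extreme points). -/
noncomputable def vertexCount (P : Set E) : ℕ := (P.extremePoints ℝ).ncard

/-- A simplex: a polytope with `dim + 1` vertices (the empty set counts as a simplex). -/
def IsSimplex (P : Set E) : Prop :=
  IsPolytope P ∧ (vertexCount P : ℤ) = polyDim P + 1

/-- Faces of a polytope are its extreme subsets. -/
def IsFaceOf (F P : Set E) : Prop := IsExtreme ℝ P F

/-- Number of `k`-dimensional simplex faces of `P`. -/
noncomputable def simpCount (P : Set E) (k : ℤ) : ℕ :=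
  {F : Set E | IsFaceOf F P ∧ IsSimplex F ∧ polyDim F = k}.ncard

/-- Number of `k`-dimensional simplex faces of `P` containing the origin. -/
noncomputable def simpCount0 (P : Set E) (k : ℤ) : ℕ :=
  {F : Set E | IsFaceOf F P ∧ IsSimplex F ∧ polyDim F = k ∧ (0 : E) ∈ F}.ncard

/-- Number of `k`-dimensional simplex faces of `P` not containing the origin. -/
noncomputable def simpCount1 (P : Set E) (k : ℤ) : ℕ :=
  {F : Set E | IsFaceOf F P ∧ IsSimplex F ∧ polyDim F = k ∧ (0 : E) ∉ F}.ncard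

/-- The order polytope of a poset. -/
def orderPolytope (α : Type*) [PartialOrder α] : Set (α → ℝ) :=
  {x | (∀ p, 0 ≤ x p ∧ x p ≤ 1) ∧ ∀ p q : α, p ≤ q → x p ≤ x q}

/-- The chain polytope of a poset. -/
def chainPolytope (α : Type*) [PartialOrder α] : Set (α → ℝ) :=
  {x | (∀ p, 0 ≤ x p) ∧ ∀ s : Finset α, IsChain (· ≤ ·) (s : Set α) → ∑ p ∈ s, x p ≤ 1}

open Classical in
/-- Characteristic vector of a subset. -/
noncomputable def chi {α : Type*} (S : Set α) : α → ℝ := fun p => if p ∈ S then 1 else 0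

/-!
A simplex face `F` of `C(P)` through `0` is the convex hull of `0` and the unit vectors `e_r`,
`r ∈ Q`, for a chain `Q` with `#Q = dim F`. Indeed `C(P)` is down-closed, so `F` contains `e_r` for
every `r` in its support `Q`; these `#Q + 1` points are vertices of `F` while `dim F ≤ #Q`, so for a
simplex they are all its vertices, and incomparable `p, q ∈ Q` would give the further vertex
`e_p + e_q`.

Conversely, for a chain `Q` the points `0` and `χ(↑q)`, `q ∈ Q`, are the vertices of a
`#Q`-simplex face of `O(P)`, and distinct chains give distinct faces. The face is the one cut out by
the inequalities of `O(P)` tight at these points; by Krein–Milman it is the convex hull of its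
extreme points, which are 0/1 vectors like all vertices of `O(P)`, and the only 0/1 vectors in it
are the given points. Both counts are thus compared with the number of `k`-chains of `P`.
-/

theorem IsExtreme.mem_of_smul_mem {C F : Set E} (hF : IsExtreme ℝ C F) (h0 : (0 : E) ∈ C)
    {v : E} (hv : v ∈ C) {t : ℝ} (ht₀ : 0 < t) (ht₁ : t < 1) (htv : t • v ∈ F) : v ∈ F :=
  hF.right_mem_of_mem_openSegment h0 hv htv ⟨1 - t, t, by linarith, ht₀, by ring, by simp⟩

theorem IsExtreme.mem_of_le [PartialOrder E] [IsOrderedAddMonoid E] {C F : Set E}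
    (hC : ∀ x ∈ C, ∀ y, 0 ≤ y → y ≤ x → y ∈ C) (hF : IsExtreme ℝ C F) (hFconv : Convex ℝ F)
    (h0 : (0 : E) ∈ F) {x y : E} (hx : x ∈ F) (hy : 0 ≤ y) (hyx : y ≤ x) : y ∈ F := by
  have hxC := hF.subset hx
  refine hF.left_mem_of_mem_openSegment (hC x hxC y hy hyx)
    (hC x hxC (x - y) (sub_nonneg.2 hyx) (sub_le_self x hy))
    (hFconv.smul_mem_of_zero_mem h0 hx ⟨by norm_num, by norm_num⟩ : (1 / 2 : ℝ) • x ∈ F)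
    ⟨1 / 2, 1 / 2, by norm_num, by norm_num, by norm_num, ?_⟩
  rw [← smul_add, add_sub_cancel]

theorem IsPolytope.extremePoints_finite {P : Set E} (hP : IsPolytope P) :
    (P.extremePoints ℝ).Finite := by
  obtain ⟨S, rfl⟩ := hP
  exact S.finite_toSet.subset extremePoints_convexHull_subset

section KreinMilman

variable [TopologicalSpace E] [T2Space E] [IsTopologicalAddGroup E] [ContinuousSMul ℝ E]
  [LocallyConvexSpace ℝ E]

theorem IsCompact.convexHull_extremePoints_of_finite {K : Set E} (hK : IsCompact K)
    (hconv : Convex ℝ K) (hfin : (K.extremePoints ℝ).Finite) :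
    convexHull ℝ (K.extremePoints ℝ) = K := by
  rw [← (hfin.isClosed_convexHull (𝕜 := ℝ)).closure_eq, closure_convexHull_extremePoints hK hconv]

theorem IsPolytope.convexHull_extremePoints {P : Set E} (hP : IsPolytope P) :
    convexHull ℝ (P.extremePoints ℝ) = P := by
  obtain ⟨S, rfl⟩ := id hP
  exact (S.finite_toSet.isCompact_convexHull (𝕜 := ℝ)).convexHull_extremePoints_of_finite
    (convex_convexHull ℝ _) hP.extremePoints_finite

end KreinMilman

theorem vectorSpan_convexHull (s : Set E) : vectorSpan ℝ (convexHull ℝ s) = vectorSpan ℝ s := by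
  rw [← direction_affineSpan, affineSpan_convexHull, direction_affineSpan]

open Classical in
noncomputable def simplexVertices {β γ : Type*} [Zero γ] (v : β → γ) (Q : Finset β) : Finset γ :=
  insert 0 (Q.image v)

section SimplexVertices

variable {β γ : Type*} [Zero γ] {v : β → γ} {Q : Finset β}

theorem mem_simplexVertices {x : γ} : x ∈ simplexVertices v Q ↔ x = 0 ∨ ∃ b ∈ Q, v b = x := by
  simp [simplexVertices]

theorem zero_mem_simplexVertices : (0 : γ) ∈ simplexVertices v Q :=
  mem_simplexVertices.2 (Or.inl rfl)

variable (hv : v.Injective) (hv0 : ∀ b, v b ≠ 0)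
include hv hv0

theorem card_simplexVertices : (simplexVertices v Q).card = Q.card + 1 := by
  classical
  rw [simplexVertices, Finset.card_insert_of_notMem (by simpa using fun b _ => hv0 b),
    Finset.card_image_of_injective Q hv]

theorem apply_mem_simplexVertices_iff {b : β} : v b ∈ simplexVertices v Q ↔ b ∈ Q := by
  simp [mem_simplexVertices, hv0 b, hv.eq_iff]

end SimplexVertices

theorem vectorSpan_convexHull_simplexVertices {β : Type*} (v : β → E) (Q : Finset β) :
    vectorSpan ℝ (convexHull ℝ (simplexVertices v Q : Set E)) = Submodule.span ℝ (v '' ↑Q) := by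
  classical
  rw [vectorSpan_convexHull,
    vectorSpan_eq_span_vsub_set_right ℝ (Finset.mem_coe.2 zero_mem_simplexVertices)]
  simp [simplexVertices]

section Chi

variable {α : Type*}

theorem chi_empty : chi (∅ : Set α) = 0 := funext fun _ => by simp [chi]

theorem chi_injective : Function.Injective (chi : Set α → α → ℝ) := by
  intro S T h
  ext p
  have hp := congrFun h p
  by_cases hS : p ∈ S <;> by_cases hT : p ∈ T <;> simp_all [chi]

theorem chi_ne_zero {S : Set α} (hS : S.Nonempty) : chi S ≠ 0 := by
  rw [← chi_empty]
  exact chi_injective.ne hS.ne_empty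

theorem chi_insert {S : Set α} {p : α} (hp : p ∉ S) : chi (insert p S) = chi {p} + chi S := by
  funext r
  simp only [Pi.add_apply]
  unfold chi
  split_ifs <;> simp_all

theorem eq_chi_setOf_eq_one {x : α → ℝ} (hx : ∀ p, x p = 0 ∨ x p = 1) :
    x = chi {p | x p = 1} := by
  funext p
  rcases hx p with h | h <;> simp [chi, h]

theorem chi_mem_cube (S : Set α) : chi S ∈ univ.pi fun _ : α => Icc (0 : ℝ) 1 := by
  intro p _
  by_cases hp : p ∈ S <;> simp [chi, hp]

theorem chi_mem_extremePoints {F : Set (α → ℝ)} (hF : F ⊆ univ.pi fun _ => Icc 0 1)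
    {S : Set α} (hS : chi S ∈ F) : chi S ∈ F.extremePoints ℝ := by
  refine inter_extremePoints_subset_extremePoints_of_subset hF ⟨hS, ?_⟩
  rw [extremePoints_pi]
  intro p _
  rw [extremePoints_Icc zero_le_one]
  by_cases hp : p ∈ S <;> simp [chi, hp]

theorem extremePoints_convexHull_of_subset_range_chi {V : Set (α → ℝ)} (hV : V ⊆ range chi) :
    (convexHull ℝ V).extremePoints ℝ = V := by
  refine extremePoints_convexHull_subset.antisymm fun v hv => ?_
  have hcube : convexHull ℝ V ⊆ univ.pi fun _ => Icc 0 1 :=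
    convexHull_min (fun w hw => (hV hw).choose_spec ▸ chi_mem_cube _)
      (convex_pi fun _ _ => convex_Icc 0 1)
  obtain ⟨S, rfl⟩ := hV hv
  exact chi_mem_extremePoints hcube (subset_convexHull ℝ V hv)

theorem simplexVertices_chi_singleton_subset_extremePoints {F : Set (α → ℝ)}
    (hF : F ⊆ univ.pi fun _ => Icc 0 1) (h0 : (0 : α → ℝ) ∈ F) {Q : Finset α}
    (hQ : ∀ r ∈ Q, chi {r} ∈ F) :
    ↑(simplexVertices (fun r => chi ({r} : Set α)) Q) ⊆ F.extremePoints ℝ := by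
  intro v hv
  rcases mem_simplexVertices.1 hv with rfl | ⟨r, hr, rfl⟩
  · exact chi_empty (α := α) ▸ chi_mem_extremePoints hF (chi_empty (α := α) ▸ h0)
  · exact chi_mem_extremePoints hF (hQ r hr)

theorem chi_pair_notMem_simplexVertices {p q : α} (hpq : p ≠ q) (Q : Finset α) :
    chi {p, q} ∉ simplexVertices (fun r => chi ({r} : Set α)) Q := by
  rw [mem_simplexVertices]
  rintro (h | ⟨r, -, hr⟩)
  · exact chi_ne_zero (insert_nonempty p {q}) h
  · have hrpq := chi_injective hr
    exact hpq ((hrpq ▸ mem_insert p {q} : p ∈ ({r} : Set α)).trans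
      (hrpq ▸ mem_insert_of_mem p rfl : q ∈ ({r} : Set α)).symm)

theorem finrank_vectorSpan_le_card {F : Set (α → ℝ)} (Q : Finset α)
    (hF : ∀ x ∈ F, ∀ p ∉ Q, x p = 0) : Module.finrank ℝ (vectorSpan ℝ F) ≤ Q.card := by
  classical
  set W : Submodule ℝ (α → ℝ) := Submodule.span ℝ ↑(Q.image fun r => chi {r})
  have hspan : F ⊆ W := by
    intro x hx
    have hsum : x = ∑ r ∈ Q, x r • chi {r} := by
      funext p
      by_cases hp : p ∈ Q <;> simp [Finset.sum_apply, chi, hp, hF x hx p]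
    rw [hsum]
    exact Submodule.sum_mem _ fun r hr => Submodule.smul_mem _ _
      (Submodule.subset_span (Finset.mem_coe.2 (Finset.mem_image_of_mem _ hr)))
  have hle : vectorSpan ℝ F ≤ W :=
    Submodule.span_le.2 fun _ ⟨x, hx, y, hy, hxy⟩ => hxy ▸ sub_mem (hspan hx) (hspan hy)
  calc Module.finrank ℝ (vectorSpan ℝ F) ≤ Module.finrank ℝ W := Submodule.finrank_mono hle
    _ ≤ (Q.image fun r => chi {r}).card := finrank_span_finset_le_card _
    _ ≤ Q.card := Finset.card_image_le

end Chi

section ChainPolytope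

variable {α : Type*} [PartialOrder α]

theorem zero_mem_chainPolytope : (0 : α → ℝ) ∈ chainPolytope α :=
  ⟨fun _ => le_rfl, fun s _ => by simp⟩

theorem chainPolytope_subset_cube : chainPolytope α ⊆ univ.pi fun _ => Icc 0 1 :=
  fun x hx p _ => ⟨hx.1 p, by simpa using hx.2 {p} (by simp)⟩

theorem mem_chainPolytope_of_le {x y : α → ℝ} (hx : x ∈ chainPolytope α) (hy : 0 ≤ y)
    (hyx : y ≤ x) : y ∈ chainPolytope α :=
  ⟨hy, fun s hs => (Finset.sum_le_sum fun p _ => hyx p).trans (hx.2 s hs)⟩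

theorem chi_mem_chainPolytope {A : Set α} (hA : IsAntichain (· ≤ ·) A) :
    chi A ∈ chainPolytope α := by
  classical
  refine ⟨fun p => (chi_mem_cube A p trivial).1, fun s hs => ?_⟩
  have hsub := inter_subsingleton_of_isChain_of_isAntichain hs hA
  calc ∑ p ∈ s, chi A p = (s.filter (· ∈ A)).card := by
        simp [chi, Finset.sum_boole]
    _ ≤ 1 := by
        exact_mod_cast Finset.card_le_one.2 fun a ha b hb =>
          hsub (by simpa using ha) (by simpa using hb)

section Face

variable {F : Set (α → ℝ)} (hF : IsExtreme ℝ (chainPolytope α) F)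
include hF

theorem chi_singleton_mem_of_apply_ne_zero (hFconv : Convex ℝ F) (h0 : (0 : α → ℝ) ∈ F)
    {x : α → ℝ} (hx : x ∈ F) {p : α} (hp : x p ≠ 0) : chi {p} ∈ F := by
  have hxC := hF.subset hx
  have ht₀ : 0 < x p := lt_of_le_of_ne (hxC.1 p) (Ne.symm hp)
  have ht₁ : x p ≤ 1 := (chainPolytope_subset_cube hxC p trivial).2
  have hle : (x p / 2) • chi {p} ≤ x := by
    intro r
    by_cases hr : r = p
    · subst hr; simp [chi]; linarith
    · simp [chi, hr, hxC.1 r]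
  have hsmul : (x p / 2) • chi {p} ∈ F :=
    hF.mem_of_le (fun _ hx _ hy hyx => mem_chainPolytope_of_le hx hy hyx) hFconv h0 hx
      (smul_nonneg (by linarith) fun r => (chi_mem_cube _ r trivial).1) hle
  exact hF.mem_of_smul_mem zero_mem_chainPolytope (chi_mem_chainPolytope IsAntichain.singleton)
    (by linarith) (by linarith) hsmul

theorem chi_pair_mem_of_incomparable (hFconv : Convex ℝ F) {p q : α} (hp : chi {p} ∈ F)
    (hq : chi {q} ∈ F) (hpq : ¬ p ≤ q) (hqp : ¬ q ≤ p) : chi {p, q} ∈ F := by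
  have hmid : (1 / 2 : ℝ) • chi {p, q} ∈ F := by
    rw [chi_insert (by simpa using fun h : p = q => hpq h.le), smul_add]
    exact hFconv hp hq (by norm_num) (by norm_num) (by norm_num)
  have hA : IsAntichain (· ≤ ·) ({p, q} : Set α) :=
    IsAntichain.singleton.insert (by simpa using fun _ => hqp) (by simpa using fun _ => hpq)
  exact hF.mem_of_smul_mem zero_mem_chainPolytope (chi_mem_chainPolytope hA)
    (by norm_num) (by norm_num) hmid

end Face

theorem exists_chain_eq_convexHull_of_isSimplex [Fintype α] {F : Set (α → ℝ)} {k : ℕ}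
    (hface : IsFaceOf F (chainPolytope α)) (hsimp : IsSimplex F) (hdim : polyDim F = k)
    (h0 : (0 : α → ℝ) ∈ F) :
    ∃ Q : Finset α, IsChain (· ≤ ·) (Q : Set α) ∧ Q.card = k ∧
      F = convexHull ℝ ↑(simplexVertices (fun r => chi ({r} : Set α)) Q) := by
  classical
  have hF : IsExtreme ℝ (chainPolytope α) F := hface
  have hFconv : Convex ℝ F := hsimp.1.convexHull_extremePoints ▸ convex_convexHull ℝ _
  have hcube := hF.subset.trans chainPolytope_subset_cube
  set Q := Finset.univ.filter fun r => chi ({r} : Set α) ∈ F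
  have hmemQ : ∀ r, r ∈ Q ↔ chi {r} ∈ F := by simp [Q]
  have hVext := simplexVertices_chi_singleton_subset_extremePoints hcube h0 fun r => (hmemQ r).1
  have hcardV := card_simplexVertices (v := fun r => chi ({r} : Set α)) (Q := Q)
    (chi_injective.comp singleton_injective) fun r => chi_ne_zero (singleton_nonempty r)
  have hk : k ≤ Q.card := by
    have := finrank_vectorSpan_le_card Q fun x hx p hp => by_contra fun h =>
      hp ((hmemQ p).2 (chi_singleton_mem_of_apply_ne_zero hF hFconv h0 hx h))
    rw [polyDim, if_neg (nonempty_of_mem h0).ne_empty] at hdim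
    omega
  have hfin := hsimp.1.extremePoints_finite
  have hcount : (F.extremePoints ℝ).ncard = k + 1 := by
    have := hsimp.2
    rw [hdim, vertexCount] at this
    omega
  have hVeq := Set.eq_of_subset_of_ncard_le hVext
    (by rw [hcount, Set.ncard_coe_finset, hcardV]; omega) hfin
  refine ⟨Q, fun p hp q hq hpq => ?_, ?_, ?_⟩
  · by_contra hcomp
    push Not at hcomp
    have hpair := chi_mem_extremePoints hcube
      (chi_pair_mem_of_incomparable hF hFconv ((hmemQ p).1 hp) ((hmemQ q).1 hq) hcomp.1 hcomp.2)
    rw [← hVeq] at hpair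
    exact chi_pair_notMem_simplexVertices hpq Q hpair
  · have := Set.ncard_le_ncard hVext hfin
    rw [Set.ncard_coe_finset, hcardV, hcount] at this
    omega
  · rw [← hsimp.1.convexHull_extremePoints, ← hVeq]

end ChainPolytope

theorem IsChain.exists_isGreatest {α : Type*} [PartialOrder α] {s : Set α}
    (hs : IsChain (· ≤ ·) s) (hfin : s.Finite) (hne : s.Nonempty) : ∃ m, IsGreatest s m := by
  obtain ⟨m, hm⟩ := hfin.exists_maximal hne
  exact ⟨m, hm.prop, fun x hx => (hs.total hx hm.prop).elim id (hm.le_of_ge hx)⟩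

theorem IsChain.exists_isLeast {α : Type*} [PartialOrder α] {s : Set α}
    (hs : IsChain (· ≤ ·) s) (hfin : s.Finite) (hne : s.Nonempty) : ∃ m, IsLeast s m := by
  obtain ⟨m, hm⟩ := hfin.exists_minimal hne
  exact ⟨m, hm.prop, fun x hx => (hs.total hm.prop hx).elim id (hm.le_of_le hx)⟩

theorem IsUpperSet.eq_empty_or_eq_Ici {α : Type*} [PartialOrder α] {Q : Finset α}
    (hQ : IsChain (· ≤ ·) (Q : Set α)) {U : Set α} (hU : IsUpperSet U)
    (hbelow : ∀ p ∈ U, ∃ q ∈ Q, q ≤ p)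
    (hdown : ∀ r p, r ≤ p → (∀ q ∈ Q, q ≤ p → q ≤ r) → p ∈ U → r ∈ U) :
    U = ∅ ∨ ∃ q ∈ Q, U = Ici q := by
  have hkey : ∀ p ∈ U, ∃ m ∈ U ∩ Q, m ≤ p := by
    intro p hp
    obtain ⟨q, hqQ, hqp⟩ := hbelow p hp
    obtain ⟨m, ⟨hmQ, hmp⟩, hmax⟩ := (hQ.mono (sep_subset _ _)).exists_isGreatest
      (Q.finite_toSet.subset (sep_subset _ fun q => q ≤ p)) ⟨q, hqQ, hqp⟩
    exact ⟨m, ⟨hdown m p hmp (fun q hq hqp => hmax ⟨hq, hqp⟩) hp, hmQ⟩, hmp⟩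
  rcases (U ∩ Q).eq_empty_or_nonempty with h | h
  · refine Or.inl (eq_empty_iff_forall_notMem.2 fun p hp => ?_)
    obtain ⟨m, hm, -⟩ := hkey p hp
    exact h.subset hm
  · obtain ⟨q, ⟨hqU, hqQ⟩, hmin⟩ := (hQ.mono inter_subset_right).exists_isLeast
      (Q.finite_toSet.subset inter_subset_right) h
    refine Or.inr ⟨q, hqQ, Set.ext fun p => ⟨fun hp => ?_, fun hp => hU hp hqU⟩⟩
    obtain ⟨m, hm, hmp⟩ := hkey p hp
    exact (hmin hm).trans hmp

section OrderPolytope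

variable {α : Type*} [PartialOrder α]

theorem orderPolytope_subset_cube : orderPolytope α ⊆ univ.pi fun _ => Icc 0 1 :=
  fun _ hx p _ => hx.1 p

theorem isClosed_orderPolytope : IsClosed (orderPolytope α) := by
  simp only [orderPolytope, ofPred_and, ofPred_forall]
  exact (isClosed_iInter fun p => (isClosed_le continuous_const (continuous_apply p)).inter
      (isClosed_le (continuous_apply p) continuous_const)).inter
    (isClosed_iInter fun p => isClosed_iInter fun q => isClosed_iInter fun _ =>
      isClosed_le (continuous_apply p) (continuous_apply q))

theorem convex_orderPolytope : Convex ℝ (orderPolytope α) := by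
  rintro x ⟨hx01, hxmono⟩ y ⟨hy01, hymono⟩ a b ha hb hab
  refine ⟨fun p => ?_, fun p q hpq => ?_⟩
  · have := hx01 p; have := hy01 p
    simp only [Pi.add_apply, Pi.smul_apply, smul_eq_mul]
    constructor <;> nlinarith
  · have := hxmono p q hpq; have := hymono p q hpq
    simp only [Pi.add_apply, Pi.smul_apply, smul_eq_mul]
    nlinarith

theorem chi_mem_orderPolytope {U : Set α} (hU : IsUpperSet U) : chi U ∈ orderPolytope α := by
  refine ⟨fun p => chi_mem_cube U p trivial, fun p q hpq => ?_⟩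
  by_cases hp : p ∈ U
  · simp [chi, hp, hU hpq hp]
  · by_cases hq : q ∈ U <;> simp [chi, hp, hq]

theorem add_smul_chi_level_mem_orderPolytope {x : α → ℝ} (hx : x ∈ orderPolytope α) {t ε δ : ℝ}
    (ht₀ : 0 < t) (ht₁ : t < 1) (hε : ∀ v ∈ insert 0 (insert 1 (range x)), v ≠ t → ε ≤ |v - t|)
    (hδ : |δ| ≤ ε) : x + δ • chi {p | x p = t} ∈ orderPolytope α := by
  obtain ⟨hδl, hδr⟩ := abs_le.1 hδ
  have h0 : ε ≤ t := by simpa [abs_of_pos ht₀] using hε 0 (by simp) ht₀.ne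
  have h1 : ε ≤ 1 - t := by
    simpa [abs_of_pos (sub_pos.2 ht₁)] using hε 1 (by simp) ht₁.ne'
  have hgap : ∀ r, x r ≠ t → ε ≤ |x r - t| := fun r hr => hε (x r) (by simp) hr
  refine ⟨fun r => ?_, fun r s hrs => ?_⟩
  · by_cases hr : x r = t
    · simp only [Pi.add_apply, Pi.smul_apply, smul_eq_mul, chi, mem_ofPred_eq, hr, if_true]
      constructor <;> linarith
    · simpa [chi, hr] using hx.1 r
  · have hmono := hx.2 r s hrs
    by_cases hr : x r = t <;> by_cases hs : x s = t
    · simp [chi, hr, hs]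
    · have := hgap s hs
      rw [abs_of_pos (lt_of_le_of_ne (hr ▸ hmono) (Ne.symm hs) |> sub_pos.2)] at this
      simp [chi, hr, hs]
      linarith
    · have := hgap r hr
      rw [abs_of_neg (lt_of_le_of_ne (hs ▸ hmono) hr |> sub_neg.2)] at this
      simp [chi, hr, hs]
      linarith
    · simpa [chi, hr, hs] using hmono

theorem extremePoints_orderPolytope_subset_range_chi [Finite α] :
    (orderPolytope α).extremePoints ℝ ⊆ range chi := by
  intro x hx
  refine ⟨_, (eq_chi_setOf_eq_one fun p => ?_).symm⟩
  by_contra hp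
  push Not at hp
  set t := x p
  have ht₀ : 0 < t := lt_of_le_of_ne (hx.1.1 p).1 (Ne.symm hp.1)
  have ht₁ : t < 1 := lt_of_le_of_ne (hx.1.1 p).2 hp.2
  set D : Set ℝ := insert 0 (insert 1 (range x))
  obtain ⟨ε, hε, hball⟩ := Metric.isOpen_iff.1
    (D.toFinite.sdiff (t := {t})).isClosed.isOpen_compl t (by simp)
  have hgap : ∀ v ∈ D, v ≠ t → ε ≤ |v - t| := fun v hv hvt => by
    by_contra h
    exact hball (Metric.mem_ball.2 (by rw [Real.dist_eq]; linarith)) ⟨hv, hvt⟩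
  have hmem : ∀ δ, |δ| ≤ ε → x + δ • chi {r | x r = t} ∈ orderPolytope α := fun δ hδ =>
    add_smul_chi_level_mem_orderPolytope hx.1 ht₀ ht₁ hgap hδ
  have hseg : x ∈ openSegment ℝ (x + ε • chi {r | x r = t}) (x + (-ε) • chi {r | x r = t}) :=
    ⟨1 / 2, 1 / 2, by norm_num, by norm_num, by norm_num, by module⟩
  have heq := congrFun (hx.2 (hmem ε (abs_of_pos hε).le) (hmem (-ε) (by simp [abs_of_pos hε]))
    hseg) p
  simp [chi, t] at heq
  exact hε.ne' heq

end OrderPolytope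

section ChainFace

variable {α : Type*} [PartialOrder α]

/-- The smallest face of the order polytope containing `0` and the `chi (Ici q)`, `q ∈ Q`: each
defining inequality of `orderPolytope α` that is tight at all these points becomes an equality. -/
def chainFace (Q : Finset α) : Set (α → ℝ) :=
  {x ∈ orderPolytope α | (∀ p, (∀ q ∈ Q, ¬ q ≤ p) → x p = 0) ∧
    ∀ r p, r ≤ p → (∀ q ∈ Q, q ≤ p → q ≤ r) → x r = x p}

theorem zero_mem_chainFace (Q : Finset α) : (0 : α → ℝ) ∈ chainFace Q :=
  ⟨chi_empty (α := α) ▸ chi_mem_orderPolytope isUpperSet_empty, fun _ _ => rfl,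
    fun _ _ _ _ => rfl⟩

theorem chi_Ici_mem_chainFace {Q : Finset α} {q : α} (hq : q ∈ Q) : chi (Ici q) ∈ chainFace Q := by
  refine ⟨chi_mem_orderPolytope (isUpperSet_Ici q), fun p hp => by simp [chi, hp q hq],
    fun r p hrp hQ => ?_⟩
  by_cases hqr : q ≤ r
  · simp [chi, hqr, hqr.trans hrp]
  · simp [chi, hqr, show ¬ q ≤ p from fun h => hqr (hQ q hq h)]

theorem convex_chainFace (Q : Finset α) : Convex ℝ (chainFace Q) := by
  rintro x ⟨hxO, hx0, hxeq⟩ y ⟨hyO, hy0, hyeq⟩ a b ha hb hab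
  refine ⟨convex_orderPolytope hxO hyO ha hb hab, fun p hp => ?_, fun r p hrp hQ => ?_⟩
  · simp [hx0 p hp, hy0 p hp]
  · simp [hxeq r p hrp hQ, hyeq r p hrp hQ]

theorem isExtreme_chainFace (Q : Finset α) : IsExtreme ℝ (orderPolytope α) (chainFace Q) := by
  refine ⟨sep_subset _ _, ?_⟩
  rintro x hx y hy z ⟨-, hz0, hzeq⟩ ⟨a, b, ha, hb, -, rfl⟩
  refine ⟨hx, fun p hp => ?_, fun r p hrp hQ => ?_⟩
  · have := hz0 p hp
    simp only [Pi.add_apply, Pi.smul_apply, smul_eq_mul] at this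
    nlinarith [(hx.1 p).1, (hy.1 p).1]
  · have := hzeq r p hrp hQ
    simp only [Pi.add_apply, Pi.smul_apply, smul_eq_mul] at this
    nlinarith [hx.2 r p hrp, hy.2 r p hrp]

theorem isClosed_chainFace (Q : Finset α) : IsClosed (chainFace Q) := by
  simp only [chainFace, ofPred_and, ofPred_forall, ofPred_mem_eq]
  exact isClosed_orderPolytope.inter
    ((isClosed_iInter fun p => isClosed_iInter fun _ => isClosed_eq (continuous_apply p)
      continuous_const).inter
    (isClosed_iInter fun r => isClosed_iInter fun p => isClosed_iInter fun _ =>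
      isClosed_iInter fun _ => isClosed_eq (continuous_apply r) (continuous_apply p)))

theorem isCompact_chainFace (Q : Finset α) : IsCompact (chainFace Q) :=
  (isCompact_univ_pi fun _ => isCompact_Icc).of_isClosed_subset (isClosed_chainFace Q)
    fun _ hx => orderPolytope_subset_cube hx.1

theorem chi_Ici_injective : Function.Injective fun q : α => chi (Ici q) :=
  chi_injective.comp Ici_injective

theorem chi_Ici_ne_zero (q : α) : chi (Ici q) ≠ 0 :=
  chi_ne_zero nonempty_Ici

theorem linearIndependent_chi_Ici [Finite α] : LinearIndependent ℝ fun q : α => chi (Ici q) := by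
  rw [linearIndependent_iff']
  intro s g hsum i
  induction i using WellFoundedLT.induction with
  | _ i ih =>
    intro hi
    have hi_eval := congrFun hsum i
    rw [Finset.sum_apply, Finset.sum_eq_single i] at hi_eval
    · simpa [chi] using hi_eval
    · intro j hj hji
      by_cases hji' : j ≤ i
      · simp [ih j (lt_of_le_of_ne hji' hji) hj]
      · simp [chi, hji']
    · exact fun h => absurd hi h

variable {Q : Finset α}

theorem simplexVertices_subset_chainFace :
    ↑(simplexVertices (fun q => chi (Ici q)) Q) ⊆ chainFace Q := by
  intro x hx
  rcases mem_simplexVertices.1 hx with rfl | ⟨q, hq, rfl⟩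
  exacts [zero_mem_chainFace Q, chi_Ici_mem_chainFace hq]

theorem extremePoints_chainFace_subset [Finite α] (hQ : IsChain (· ≤ ·) (Q : Set α)) :
    (chainFace Q).extremePoints ℝ ⊆ ↑(simplexVertices (fun q => chi (Ici q)) Q) := by
  intro x hx
  obtain ⟨U, rfl⟩ := extremePoints_orderPolytope_subset_range_chi
    ((isExtreme_chainFace Q).extremePoints_subset_extremePoints hx)
  obtain ⟨hxO, hx0, hxeq⟩ := hx.1
  have hU : IsUpperSet U := fun r p hrp hr => by
    by_contra hp
    have := hxO.2 r p hrp
    norm_num [chi, hr, hp] at this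
  rcases hU.eq_empty_or_eq_Ici hQ
      (fun p hp => by by_contra h; push Not at h; simpa [chi, hp] using hx0 p h)
      (fun r p hrp hQ hp => by by_contra hr; simpa [chi, hp, hr] using hxeq r p hrp hQ)
    with rfl | ⟨q, hq, rfl⟩
  · exact chi_empty (α := α) ▸ zero_mem_simplexVertices
  · exact mem_simplexVertices.2 (Or.inr ⟨q, hq, rfl⟩)

theorem chainFace_eq_convexHull [Finite α] (hQ : IsChain (· ≤ ·) (Q : Set α)) :
    chainFace Q = convexHull ℝ ↑(simplexVertices (fun q => chi (Ici q)) Q) := by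
  refine (convexHull_min simplexVertices_subset_chainFace (convex_chainFace Q)).antisymm' ?_
  have hfin := (simplexVertices _ Q).finite_toSet.subset (extremePoints_chainFace_subset hQ)
  calc chainFace Q = convexHull ℝ ((chainFace Q).extremePoints ℝ) :=
        ((isCompact_chainFace Q).convexHull_extremePoints_of_finite (convex_chainFace Q) hfin).symm
    _ ⊆ _ := convexHull_mono (extremePoints_chainFace_subset hQ)

theorem extremePoints_chainFace [Finite α] (hQ : IsChain (· ≤ ·) (Q : Set α)) :
    (chainFace Q).extremePoints ℝ = ↑(simplexVertices (fun q => chi (Ici q)) Q) := by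
  rw [chainFace_eq_convexHull hQ, extremePoints_convexHull_of_subset_range_chi]
  intro v hv
  rcases mem_simplexVertices.1 hv with rfl | ⟨q, -, rfl⟩
  exacts [⟨∅, chi_empty⟩, ⟨Ici q, rfl⟩]

theorem polyDim_chainFace [Finite α] (hQ : IsChain (· ≤ ·) (Q : Set α)) :
    polyDim (chainFace Q) = Q.card := by
  classical
  have hli := linearIndependent_chi_Ici.comp ((↑) : ↥(Q : Set α) → α) Subtype.val_injective
  rw [polyDim, if_neg (nonempty_of_mem (zero_mem_chainFace Q)).ne_empty,
    chainFace_eq_convexHull hQ, vectorSpan_convexHull_simplexVertices,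
    ← Subtype.range_coe (s := (Q : Set α)), ← range_comp, finrank_span_eq_card hli]
  simp

theorem isSimplex_chainFace [Finite α] (hQ : IsChain (· ≤ ·) (Q : Set α)) :
    IsSimplex (chainFace Q) := by
  refine ⟨⟨_, chainFace_eq_convexHull hQ⟩, ?_⟩
  rw [vertexCount, extremePoints_chainFace hQ, ncard_coe_finset,
    card_simplexVertices chi_Ici_injective chi_Ici_ne_zero, polyDim_chainFace hQ]
  push_cast
  ring

theorem chainFace_injOn [Finite α] :
    InjOn chainFace {Q : Finset α | IsChain (· ≤ ·) (Q : Set α)} := by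
  intro Q hQ Q' hQ' h
  have hV := congrArg (fun F => F.extremePoints ℝ) h
  simp only [extremePoints_chainFace hQ, extremePoints_chainFace hQ', Finset.coe_inj] at hV
  ext q
  rw [← apply_mem_simplexVertices_iff chi_Ici_injective chi_Ici_ne_zero, hV,
    apply_mem_simplexVertices_iff chi_Ici_injective chi_Ici_ne_zero]

end ChainFace

section Counting

variable {α : Type*} [PartialOrder α]

theorem finite_setOf_isFaceOf_orderPolytope [Finite α] :
    {F : Set (α → ℝ) | IsFaceOf F (orderPolytope α) ∧ IsPolytope F}.Finite := by
  refine ((finite_range chi).finite_subsets.image (convexHull ℝ)).subset ?_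
  rintro F ⟨hface, hpoly⟩
  exact ⟨F.extremePoints ℝ, (IsExtreme.extremePoints_subset_extremePoints hface).trans
    extremePoints_orderPolytope_subset_range_chi, hpoly.convexHull_extremePoints⟩

theorem simpCount0_chainPolytope_le_ncard_chains [Fintype α] (k : ℕ) :
    simpCount0 (chainPolytope α) k ≤
      {Q : Finset α | IsChain (· ≤ ·) (Q : Set α) ∧ Q.card = k}.ncard :=
  calc simpCount0 (chainPolytope α) k
      ≤ ((fun Q => convexHull ℝ (simplexVertices (fun r => chi ({r} : Set α)) Q : Set (α → ℝ))) ''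
          {Q : Finset α | IsChain (· ≤ ·) (Q : Set α) ∧ Q.card = k}).ncard := by
        refine ncard_le_ncard (fun F ⟨hface, hsimp, hdim, h0⟩ => ?_) (toFinite _)
        obtain ⟨Q, hQ, hk, rfl⟩ := exists_chain_eq_convexHull_of_isSimplex hface hsimp hdim h0
        exact ⟨Q, ⟨hQ, hk⟩, rfl⟩
    _ ≤ _ := ncard_image_le (toFinite _)

theorem ncard_chains_le_simpCount0_orderPolytope [Finite α] (k : ℕ) :
    {Q : Finset α | IsChain (· ≤ ·) (Q : Set α) ∧ Q.card = k}.ncard ≤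
      simpCount0 (orderPolytope α) k :=
  ncard_le_ncard_of_injOn chainFace
    (fun Q ⟨hQ, hk⟩ => ⟨isExtreme_chainFace Q, isSimplex_chainFace hQ,
      by rw [polyDim_chainFace hQ, hk], zero_mem_chainFace Q⟩)
    (chainFace_injOn.mono fun _ hQ => hQ.1)
    (finite_setOf_isFaceOf_orderPolytope.subset fun _ hF => ⟨hF.1, hF.2.1.1⟩)

end Counting

/-- the chain polytope has at most as many `k`-dimensional simplex faces
containing the origin as the order polytope. -/
theorem chain_simpCount0_le_order_simpCount0 (α : Type*) [Fintype α] [PartialOrder α] (k : ℕ) :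
    simpCount0 (chainPolytope α) (k : ℤ) ≤ simpCount0 (orderPolytope α) (k : ℤ) :=
  (simpCount0_chainPolytope_le_ncard_chains k).trans (ncard_chains_le_simpCount0_orderPolytope k)
end

section
/- For any finite posets A and B, the order polytope of the ordinal sum satisfies O(A < B) ≅ O(A) ∨ O(B^op) (combinatorial isomorphism), and the chain polytope satisfies C(A < B) = C(A) ∨ C(B). -/
open Set

variable {E : Type*} [AddCommGroup E] [Module ℝ E]

/-- Subdirect sum of two polytopes (each containing the origin as a vertex). -/
def subdirectSum {E F : Type*} [AddCommGroup E] [Module ℝ E] [AddCommGroup F] [Module ℝ F]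
    (P : Set E) (Q : Set F) : Set (E × F) :=
  convexHull ℝ ((fun p => (p, (0 : F))) '' P ∪ (fun q => ((0 : E), q)) '' Q)


section AuxGeneric
open Sum

variable {E₁ F₁ : Type*} [AddCommGroup E₁] [Module ℝ E₁] [AddCommGroup F₁] [Module ℝ F₁]

theorem aux_isExtreme_image_iff (e : E₁ ≃ᵃ[ℝ] F₁) {P G : Set E₁} :
    IsExtreme ℝ (⇑e '' P) (⇑e '' G) ↔ IsExtreme ℝ P G := by
  have hseg : ∀ x y : E₁, ⇑e '' openSegment ℝ x y = openSegment ℝ (e x) (e y) :=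
    fun x y => image_openSegment ℝ e.toAffineMap x y
  constructor
  · rintro ⟨hsub, h⟩
    constructor
    · intro x hx
      obtain ⟨y, hy, hxy⟩ := hsub ⟨x, hx, rfl⟩
      exact (e.injective hxy) ▸ hy
    · intro x₁ hx₁ x₂ hx₂ x hx hxseg
      have := h (mem_image_of_mem _ hx₁) (mem_image_of_mem _ hx₂) (mem_image_of_mem _ hx)
        (by rw [← hseg]; exact mem_image_of_mem _ hxseg)
      exact (e.injective.mem_set_image).mp this
  · rintro ⟨hsub, h⟩
    refine ⟨image_mono hsub, ?_⟩
    rintro _ ⟨x₁, hx₁, rfl⟩ _ ⟨x₂, hx₂, rfl⟩ _ ⟨x, hx, rfl⟩ hxseg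
    rw [← hseg] at hxseg
    obtain ⟨y, hy, hxy⟩ := hxseg
    have := h hx₁ hx₂ hx (e.injective hxy ▸ hy)
    exact mem_image_of_mem _ this

theorem aux_img_symm_img (e : E₁ ≃ᵃ[ℝ] F₁) (S : Set F₁) : ⇑e '' (⇑e.symm '' S) = S := by
  rw [← image_comp]; ext z; simp

theorem aux_symm_img_img (e : E₁ ≃ᵃ[ℝ] F₁) (S : Set E₁) : ⇑e.symm '' (⇑e '' S) = S := by
  rw [← image_comp]; ext z; simp

noncomputable def auxFaceOrderIso (e : E₁ ≃ᵃ[ℝ] F₁) (P : Set E₁) :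
    {G : Set E₁ // IsExtreme ℝ P G} ≃o {G : Set F₁ // IsExtreme ℝ (⇑e '' P) G} where
  toFun G := ⟨⇑e '' G.1, (aux_isExtreme_image_iff e).mpr G.2⟩
  invFun G := ⟨⇑e.symm '' G.1,
    (aux_isExtreme_image_iff e).mp ((aux_img_symm_img e G.1).symm ▸ G.2)⟩
  left_inv G := by ext1; exact aux_symm_img_img e G.1
  right_inv G := by ext1; exact aux_img_symm_img e G.1
  map_rel_iff' {G G'} := Set.image_subset_image_iff e.injective

variable {P : Set E₁} {Q : Set F₁}

theorem aux_mem_subdirect_left {u : E₁} (hu : u ∈ P) : (u, (0:F₁)) ∈ subdirectSum P Q :=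
  subset_convexHull ℝ _ (Or.inl ⟨u, hu, rfl⟩)

theorem aux_mem_subdirect_right {v : F₁} (hv : v ∈ Q) : ((0:E₁), v) ∈ subdirectSum P Q :=
  subset_convexHull ℝ _ (Or.inr ⟨v, hv, rfl⟩)

theorem aux_mem_subdirect_combo {u : E₁} {v : F₁} {l : ℝ} (hl0 : 0 ≤ l) (hl1 : l ≤ 1)
    (hu : u ∈ P) (hv : v ∈ Q) : (l • u, (1-l) • v) ∈ subdirectSum P Q := by
  have h := (convex_convexHull ℝ
      ((fun p => (p, (0 : F₁))) '' P ∪ (fun q => ((0 : E₁), q)) '' Q))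
    (aux_mem_subdirect_left hu) (aux_mem_subdirect_right hv) (a := l) (b := 1 - l)
    hl0 (by linarith) (by ring)
  have heq : (l • u, (1-l) • v) = l • (u, (0:F₁)) + (1-l) • ((0:E₁), v) := by
    ext <;> simp
  rw [heq]
  exact h

end AuxGeneric

section AuxLex
open Sum

theorem aux_orderPolytope_convex (α : Type*) [PartialOrder α] :
    Convex ℝ (orderPolytope α) := by
  intro x hx y hy a b ha hb hab
  refine ⟨fun p => ⟨?_, ?_⟩, fun p q hpq => ?_⟩
  · have := (hx.1 p).1; have := (hy.1 p).1
    simp only [Pi.add_apply, Pi.smul_apply, smul_eq_mul]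
    nlinarith
  · have := (hx.1 p).2; have := (hy.1 p).2
    simp only [Pi.add_apply, Pi.smul_apply, smul_eq_mul]
    nlinarith
  · have := hx.2 p q hpq; have := hy.2 p q hpq
    simp only [Pi.add_apply, Pi.smul_apply, smul_eq_mul]
    nlinarith

theorem aux_chainPolytope_convex (α : Type*) [PartialOrder α] :
    Convex ℝ (chainPolytope α) := by
  intro x hx y hy a b ha hb hab
  refine ⟨fun p => ?_, fun s hs => ?_⟩
  · have := hx.1 p; have := hy.1 p
    simp only [Pi.add_apply, Pi.smul_apply, smul_eq_mul]
    nlinarith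
  · have h1 := hx.2 s hs; have h2 := hy.2 s hs
    simp only [Pi.add_apply, Pi.smul_apply, smul_eq_mul]
    rw [Finset.sum_add_distrib, ← Finset.mul_sum, ← Finset.mul_sum]
    nlinarith [Finset.sum_nonneg (fun p _ => hx.1 p) (s := s),
      Finset.sum_nonneg (fun p _ => hy.1 p) (s := s)]

variable (A B : Type*) [Fintype A] [PartialOrder A] [Fintype B] [PartialOrder B]

noncomputable def lexLinEquiv : ((A ⊕ₗ B) → ℝ) ≃ₗ[ℝ] (A → ℝ) × (Bᵒᵈ → ℝ) where
  toFun x := (fun a => x (toLex (inl a)), fun b => -x (toLex (inr (OrderDual.ofDual b))))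
  invFun uv := fun p => Sum.elim uv.1 (fun b => -uv.2 (OrderDual.toDual b)) (ofLex p)
  map_add' x y := by ext <;> simp <;> ring
  map_smul' c x := by ext <;> simp <;> ring
  left_inv x := by
    funext p
    rcases p with a | b
    · rfl
    · exact neg_neg _
  right_inv uv := by ext a <;> simp

noncomputable def lexAffEquiv : ((A ⊕ₗ B) → ℝ) ≃ᵃ[ℝ] (A → ℝ) × (Bᵒᵈ → ℝ) :=
  (lexLinEquiv A B).toAffineEquiv.trans (AffineEquiv.constVAdd ℝ _ ((0 : A → ℝ), (1 : Bᵒᵈ → ℝ)))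

theorem lexAffEquiv_apply (x : (A ⊕ₗ B) → ℝ) :
    lexAffEquiv A B x =
      (fun a => x (toLex (inl a)), fun b => 1 - x (toLex (inr (OrderDual.ofDual b)))) := by
  ext a
  · simp [lexAffEquiv, lexLinEquiv, AffineEquiv.constVAdd, AffineEquiv.coe_mk, Equiv.constVAdd]
  · simp [lexAffEquiv, lexLinEquiv, AffineEquiv.constVAdd, AffineEquiv.coe_mk, Equiv.constVAdd]; ring

theorem orderPolytope_image :
    ⇑(lexAffEquiv A B) '' orderPolytope (A ⊕ₗ B) =
      subdirectSum (orderPolytope A) (orderPolytope Bᵒᵈ) := by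
  apply Set.Subset.antisymm
  · rintro _ ⟨x, hx, rfl⟩
    rw [lexAffEquiv_apply]
    set u : A → ℝ := fun a => x (toLex (inl a)) with hu_def
    set v : Bᵒᵈ → ℝ := fun b => 1 - x (toLex (inr (OrderDual.ofDual b))) with hv_def
    have hvmem : v ∈ orderPolytope Bᵒᵈ := by
      refine ⟨fun p => ⟨?_, ?_⟩, fun p q hpq => ?_⟩
      · have := (hx.1 (toLex (inr (OrderDual.ofDual p)))).2; simp only [hv_def]; linarith
      · have := (hx.1 (toLex (inr (OrderDual.ofDual p)))).1; simp only [hv_def]; linarith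
      · have : x (toLex (inr (OrderDual.ofDual q))) ≤ x (toLex (inr (OrderDual.ofDual p))) :=
          hx.2 _ _ (Sum.Lex.inr_le_inr_iff.mpr hpq)
        simp only [hv_def]; linarith
    by_cases hA : Nonempty A
    · have hne : (Finset.univ : Finset A).Nonempty := Finset.univ_nonempty
      obtain ⟨a₀, -, ha₀⟩ := Finset.exists_mem_eq_sup' hne u
      set l : ℝ := u a₀ with hl_def
      have hub : ∀ a, u a ≤ l := fun a => ha₀ ▸ Finset.le_sup' u (Finset.mem_univ a)
      have hl0 : 0 ≤ l := (hx.1 _).1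
      have hl1 : l ≤ 1 := (hx.1 _).2
      have hbl : ∀ b : B, l ≤ x (toLex (inr b)) := fun b =>
        hx.2 _ _ (Sum.Lex.inl_le_inr a₀ b)
      rcases eq_or_lt_of_le hl0 with h0 | h0
      · have hu0 : u = 0 := funext fun a =>
          le_antisymm (le_of_le_of_eq (hub a) h0.symm) (hx.1 _).1
        rw [hu0]
        exact aux_mem_subdirect_right hvmem
      rcases eq_or_lt_of_le hl1 with h1 | h1
      · have hv0 : v = 0 := funext fun b => by
          have h2 := (hx.1 (toLex (inr (OrderDual.ofDual b)))).2
          have h3 := hbl (OrderDual.ofDual b)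
          simp only [hv_def, Pi.zero_apply]
          linarith [h1 ▸ h3]
        rw [hv0]
        have humem1 : u ∈ orderPolytope A := ⟨fun a => ⟨(hx.1 _).1, (hx.1 _).2⟩,
          fun p q hpq => hx.2 _ _ (Sum.Lex.inl_le_inl_iff.mpr hpq)⟩
        exact aux_mem_subdirect_left humem1
      · have humem : l⁻¹ • u ∈ orderPolytope A := by
          refine ⟨fun a => ⟨?_, ?_⟩, fun p q hpq => ?_⟩
          · exact mul_nonneg (inv_nonneg.mpr hl0) (hx.1 _).1
          · simp only [Pi.smul_apply, smul_eq_mul]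
            rw [← inv_mul_cancel₀ (ne_of_gt h0)]
            exact mul_le_mul_of_nonneg_left (hub _) (inv_nonneg.mpr hl0)
          · exact mul_le_mul_of_nonneg_left (hx.2 _ _ (Sum.Lex.inl_le_inl_iff.mpr hpq))
              (inv_nonneg.mpr hl0)
        have hvmem' : (1-l)⁻¹ • v ∈ orderPolytope Bᵒᵈ := by
          have h1l : (0:ℝ) < 1 - l := by linarith
          refine ⟨fun b => ⟨?_, ?_⟩, fun p q hpq => ?_⟩
          · exact mul_nonneg (inv_nonneg.mpr h1l.le) (hvmem.1 _).1
          · simp only [Pi.smul_apply, smul_eq_mul]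
            have hvb : v b ≤ 1 - l := by
              have := hbl (OrderDual.ofDual b); simp only [hv_def]; linarith
            calc (1-l)⁻¹ * v b ≤ (1-l)⁻¹ * (1-l) :=
                  mul_le_mul_of_nonneg_left hvb (inv_nonneg.mpr h1l.le)
              _ = 1 := inv_mul_cancel₀ (ne_of_gt h1l)
          · exact mul_le_mul_of_nonneg_left (hvmem.2 _ _ hpq) (inv_nonneg.mpr h1l.le)
        have hrepr : (u, v) = (l • (l⁻¹ • u), (1-l) • ((1-l)⁻¹ • v)) := by
          have h1l : (1:ℝ) - l ≠ 0 := by linarith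
          ext p
          · simp only [Pi.smul_apply, smul_eq_mul]
            field_simp
          · simp only [Pi.smul_apply, smul_eq_mul]
            field_simp
        rw [hrepr]
        exact aux_mem_subdirect_combo hl0 hl1 humem hvmem'
    · have hu0 : u = 0 := funext fun a => (hA ⟨a⟩).elim
      rw [hu0]
      exact aux_mem_subdirect_right hvmem
  · apply convexHull_min
    · rintro _ (⟨w, hw, rfl⟩ | ⟨w, hw, rfl⟩)
      · refine ⟨fun p => Sum.elim w (fun _ => (1:ℝ)) (ofLex p),
          ⟨fun p => ?_, fun p q hpq => ?_⟩, ?_⟩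
        · rcases p with a | b
          · exact ⟨(hw.1 a).1, (hw.1 a).2⟩
          · exact ⟨zero_le_one, le_refl 1⟩
        · rcases p with a | b <;> rcases q with a' | b'
          · exact hw.2 a a' (Sum.Lex.inl_le_inl_iff.mp hpq)
          · exact (hw.1 a).2
          · exact absurd hpq (Sum.Lex.not_inr_le_inl)
          · exact le_refl 1
        · rw [lexAffEquiv_apply]
          ext p
          · rfl
          · show (1:ℝ) - 1 = 0; ring
      · refine ⟨fun p => Sum.elim (fun _ => (0:ℝ)) (fun b => 1 - w (OrderDual.toDual b))
            (ofLex p), ⟨fun p => ?_, fun p q hpq => ?_⟩, ?_⟩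
        · rcases p with a | b
          · exact ⟨le_refl 0, zero_le_one⟩
          · have h1 := (hw.1 (OrderDual.toDual b)).1
            have h2 := (hw.1 (OrderDual.toDual b)).2
            refine ⟨?_, ?_⟩
            · show (0:ℝ) ≤ 1 - w (OrderDual.toDual b); linarith
            · show (1:ℝ) - w (OrderDual.toDual b) ≤ 1; linarith
        · rcases p with a | b <;> rcases q with a' | b'
          · exact le_refl 0
          · have := (hw.1 (OrderDual.toDual b')).2
            show (0:ℝ) ≤ 1 - w (OrderDual.toDual b'); linarith
          · exact absurd hpq (Sum.Lex.not_inr_le_inl)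
          · have hb : b ≤ b' := Sum.Lex.inr_le_inr_iff.mp hpq
            have : w (OrderDual.toDual b') ≤ w (OrderDual.toDual b) :=
              hw.2 _ _ (OrderDual.toDual_le_toDual.mpr hb)
            show (1:ℝ) - w (OrderDual.toDual b) ≤ 1 - w (OrderDual.toDual b'); linarith
        · rw [lexAffEquiv_apply]
          ext p
          · rfl
          · show (1:ℝ) - (1 - w p) = w p; ring
    · have hconv := aux_orderPolytope_convex (A ⊕ₗ B)
      have := hconv.affine_image (lexAffEquiv A B).toAffineMap
      simpa using this

theorem sum_lex_disjSum (u : Finset A) (v : Finset B) (x : (A ⊕ₗ B) → ℝ) :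
    ∑ p ∈ (show Finset (A ⊕ₗ B) from u.disjSum v), x p =
      ∑ a ∈ u, x (toLex (inl a)) + ∑ b ∈ v, x (toLex (inr b)) :=
  Finset.sum_disjSum u v (fun p => x (toLex p))

theorem sum_lex_decomp (s : Finset (A ⊕ₗ B)) (x : (A ⊕ₗ B) → ℝ) :
    ∑ p ∈ s, x p = ∑ a ∈ s.toLeft, x (toLex (inl a)) + ∑ b ∈ s.toRight, x (toLex (inr b)) := by
  have h := Finset.sum_disjSum s.toLeft s.toRight (fun p : A ⊕ B => x (toLex p))
  exact (congrArg (fun t : Finset (A ⊕ B) => ∑ p ∈ t, x (toLex p))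
    (Finset.toLeft_disjSum_toRight (u := (s : Finset (A ⊕ B))))).symm.trans h

theorem chain_toLeft (s : Finset (A ⊕ₗ B)) (hs : IsChain (· ≤ ·) (s : Set (A ⊕ₗ B))) :
    IsChain (· ≤ ·) (s.toLeft : Set A) := by
  intro a ha a' ha' hne
  have h1 : toLex (inl a) ∈ (s : Set (A ⊕ₗ B)) := (Finset.mem_toLeft (u := s)).mp ha
  have h2 : toLex (inl a') ∈ (s : Set (A ⊕ₗ B)) := (Finset.mem_toLeft (u := s)).mp ha'
  rcases hs h1 h2 (fun h => hne (Sum.inl_injective (show (inl a : A ⊕ B) = inl a' from h)))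
    with h | h
  · exact Or.inl (Sum.Lex.inl_le_inl_iff.mp h)
  · exact Or.inr (Sum.Lex.inl_le_inl_iff.mp h)

theorem chain_toRight (s : Finset (A ⊕ₗ B)) (hs : IsChain (· ≤ ·) (s : Set (A ⊕ₗ B))) :
    IsChain (· ≤ ·) (s.toRight : Set B) := by
  intro b hb b' hb' hne
  have h1 : toLex (inr b) ∈ (s : Set (A ⊕ₗ B)) := (Finset.mem_toRight (u := s)).mp hb
  have h2 : toLex (inr b') ∈ (s : Set (A ⊕ₗ B)) := (Finset.mem_toRight (u := s)).mp hb'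
  rcases hs h1 h2 (fun h => hne (Sum.inr_injective (show (inr b : A ⊕ B) = inr b' from h)))
    with h | h
  · exact Or.inl (Sum.Lex.inr_le_inr_iff.mp h)
  · exact Or.inr (Sum.Lex.inr_le_inr_iff.mp h)

theorem chain_disjSum (u : Finset A) (v : Finset B)
    (hu : IsChain (· ≤ ·) (u : Set A)) (hv : IsChain (· ≤ ·) (v : Set B)) :
    IsChain (· ≤ ·) (((show Finset (A ⊕ₗ B) from u.disjSum v) : Finset (A ⊕ₗ B)) :
      Set (A ⊕ₗ B)) := by
  intro p hp q hq hne
  have hp' := Finset.mem_disjSum.mp (show ofLex p ∈ u.disjSum v from hp)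
  have hq' := Finset.mem_disjSum.mp (show ofLex q ∈ u.disjSum v from hq)
  rcases p with a | b <;> rcases q with a' | b'
  · have h1 : a ∈ u := by
      rcases hp' with ⟨a₁, h1, h2⟩ | ⟨b₁, h1, h2⟩
      · obtain rfl : a₁ = a := Sum.inl_injective h2; exact h1
      · cases (show (inr b₁ : A ⊕ B) = inl a from h2)
    have h2 : a' ∈ u := by
      rcases hq' with ⟨a₁, h1, h2⟩ | ⟨b₁, h1, h2⟩
      · obtain rfl : a₁ = a' := Sum.inl_injective h2; exact h1
      · cases (show (inr b₁ : A ⊕ B) = inl a' from h2)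
    rcases hu h1 h2 (fun h => hne (by cases h; rfl)) with h | h
    · exact Or.inl (Sum.Lex.inl_le_inl_iff.mpr h)
    · exact Or.inr (Sum.Lex.inl_le_inl_iff.mpr h)
  · exact Or.inl (Sum.Lex.inl_le_inr _ _)
  · exact Or.inr (Sum.Lex.inl_le_inr _ _)
  · have h1 : b ∈ v := by
      rcases hp' with ⟨a₁, h1, h2⟩ | ⟨b₁, h1, h2⟩
      · cases (show (inl a₁ : A ⊕ B) = inr b from h2)
      · obtain rfl : b₁ = b := Sum.inr_injective h2; exact h1
    have h2 : b' ∈ v := by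
      rcases hq' with ⟨a₁, h1, h2⟩ | ⟨b₁, h1, h2⟩
      · cases (show (inl a₁ : A ⊕ B) = inr b' from h2)
      · obtain rfl : b₁ = b' := Sum.inr_injective h2; exact h1
    rcases hv h1 h2 (fun h => hne (by cases h; rfl)) with h | h
    · exact Or.inl (Sum.Lex.inr_le_inr_iff.mpr h)
    · exact Or.inr (Sum.Lex.inr_le_inr_iff.mpr h)

theorem chainPolytope_image :
    (fun x : (A ⊕ₗ B) → ℝ =>
        ((fun a : A => x (toLex (Sum.inl a))), (fun b : B => x (toLex (Sum.inr b))))) ''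
      chainPolytope (A ⊕ₗ B) = subdirectSum (chainPolytope A) (chainPolytope B) := by
  classical
  apply Set.Subset.antisymm
  · rintro _ ⟨x, hx, rfl⟩
    show ((fun a => x (toLex (Sum.inl a))), (fun b => x (toLex (Sum.inr b)))) ∈
      subdirectSum (chainPolytope A) (chainPolytope B)
    set u : A → ℝ := fun a => x (toLex (inl a)) with hu_def
    set v : B → ℝ := fun b => x (toLex (inr b)) with hv_def
    set f : Finset A → ℝ := fun s => if IsChain (· ≤ ·) (s : Set A) then ∑ a ∈ s, u a else 0
      with hf_def
    have hpne : (Finset.univ : Finset A).powerset.Nonempty :=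
      ⟨∅, Finset.empty_mem_powerset _⟩
    set l : ℝ := (Finset.univ : Finset A).powerset.sup' hpne f with hl_def
    have hf_empty : f ∅ = 0 := by simp [hf_def]
    have hl0 : 0 ≤ l := by
      have := Finset.le_sup' f (Finset.empty_mem_powerset (Finset.univ : Finset A))
      rw [hf_empty] at this
      exact this
    have hchain_le : ∀ s : Finset A, IsChain (· ≤ ·) (s : Set A) → ∑ a ∈ s, u a ≤ l := by
      intro s hs
      have := Finset.le_sup' f (Finset.mem_powerset.mpr (Finset.subset_univ s))
      rwa [show f s = ∑ a ∈ s, u a from if_pos hs] at this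
    obtain ⟨s₀, hs₀chain, hs₀sum⟩ :
        ∃ s₀ : Finset A, IsChain (· ≤ ·) (s₀ : Set A) ∧ ∑ a ∈ s₀, u a = l := by
      obtain ⟨s₀, -, h⟩ := Finset.exists_mem_eq_sup' hpne f
      by_cases hc : IsChain (· ≤ ·) (s₀ : Set A)
      · refine ⟨s₀, hc, ?_⟩
        have hfs : f s₀ = ∑ a ∈ s₀, u a := if_pos hc
        rw [← hfs]
        exact h.symm
      · refine ⟨∅, by simp, ?_⟩
        rw [Finset.sum_empty]
        have hfs : f s₀ = 0 := if_neg hc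
        exact (h.trans hfs).symm
    have key : ∀ t : Finset B, IsChain (· ≤ ·) (t : Set B) → l + ∑ b ∈ t, v b ≤ 1 := by
      intro t ht
      have hchain := chain_disjSum A B s₀ t hs₀chain ht
      have hsum := hx.2 _ hchain
      rw [sum_lex_disjSum] at hsum
      rw [← hs₀sum]
      exact hsum
    have hl1 : l ≤ 1 := by
      have := key ∅ (by simp)
      simpa using this
    rcases eq_or_lt_of_le hl1 with h1 | h1
    · have hv0 : v = 0 := funext fun b => by
        have hcs : IsChain (· ≤ ·) (↑({b} : Finset B) : Set B) := by
          rw [Finset.coe_singleton]; exact Set.subsingleton_singleton.isChain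
        have h2 := key {b} hcs
        have h3 := hx.1 (toLex (inr b))
        simp only [Finset.sum_singleton] at h2
        have : v b ≤ 0 := by rw [h1] at h2; linarith
        exact le_antisymm this h3
      rw [hv0]
      have humem : u ∈ chainPolytope A :=
        ⟨fun a => hx.1 _, fun s hs => (hchain_le s hs).trans hl1⟩
      exact aux_mem_subdirect_left humem
    rcases eq_or_lt_of_le hl0 with h0 | h0
    · have hu0 : u = 0 := funext fun a => by
        have hcs : IsChain (· ≤ ·) (↑({a} : Finset A) : Set A) := by
          rw [Finset.coe_singleton]; exact Set.subsingleton_singleton.isChain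
        have h2 := hchain_le {a} hcs
        simp only [Finset.sum_singleton] at h2
        exact le_antisymm (h2.trans h0.symm.le) (hx.1 _)
      rw [hu0]
      have hvmem : v ∈ chainPolytope B := by
        refine ⟨fun b => hx.1 _, fun t ht => ?_⟩
        have := key t ht
        linarith
      exact aux_mem_subdirect_right hvmem
    · have humem : l⁻¹ • u ∈ chainPolytope A := by
        refine ⟨fun a => mul_nonneg (inv_nonneg.mpr hl0) (hx.1 _), fun s hs => ?_⟩
        simp only [Pi.smul_apply, smul_eq_mul]
        rw [← Finset.mul_sum]
        calc l⁻¹ * ∑ a ∈ s, u a ≤ l⁻¹ * l :=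
              mul_le_mul_of_nonneg_left (hchain_le s hs) (inv_nonneg.mpr hl0)
          _ = 1 := inv_mul_cancel₀ (ne_of_gt h0)
      have hvmem : (1-l)⁻¹ • v ∈ chainPolytope B := by
        have h1l : (0:ℝ) < 1 - l := by linarith
        refine ⟨fun b => mul_nonneg (inv_nonneg.mpr h1l.le) (hx.1 _), fun t ht => ?_⟩
        simp only [Pi.smul_apply, smul_eq_mul]
        rw [← Finset.mul_sum]
        have hvt : ∑ b ∈ t, v b ≤ 1 - l := by have := key t ht; linarith
        calc (1-l)⁻¹ * ∑ b ∈ t, v b ≤ (1-l)⁻¹ * (1-l) :=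
              mul_le_mul_of_nonneg_left hvt (inv_nonneg.mpr h1l.le)
          _ = 1 := inv_mul_cancel₀ (ne_of_gt h1l)
      have hrepr : (u, v) = (l • (l⁻¹ • u), (1-l) • ((1-l)⁻¹ • v)) := by
        have h1l : (1:ℝ) - l ≠ 0 := by
          intro h; rw [sub_eq_zero] at h; exact absurd h.symm h1.ne
        ext p
        · simp only [Pi.smul_apply, smul_eq_mul]
          field_simp
        · simp only [Pi.smul_apply, smul_eq_mul]
          field_simp
      rw [hrepr]
      exact aux_mem_subdirect_combo h0.le hl1 humem hvmem
  · apply convexHull_min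
    · rintro _ (⟨w, hw, rfl⟩ | ⟨w, hw, rfl⟩)
      · refine ⟨fun p => Sum.elim w (fun _ => (0:ℝ)) (ofLex p),
          ⟨fun p => ?_, fun s hs => ?_⟩, ?_⟩
        · rcases p with a | b
          · exact hw.1 a
          · exact le_refl 0
        · rw [sum_lex_decomp]
          calc ∑ a ∈ s.toLeft, w a + ∑ b ∈ s.toRight,
                Sum.elim w (fun _ => (0:ℝ)) (inr b) = ∑ a ∈ s.toLeft, w a := by simp
            _ ≤ 1 := hw.2 s.toLeft (chain_toLeft A B s hs)
        · ext p
          · rfl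
          · rfl
      · refine ⟨fun p => Sum.elim (fun _ => (0:ℝ)) w (ofLex p),
          ⟨fun p => ?_, fun s hs => ?_⟩, ?_⟩
        · rcases p with a | b
          · exact le_refl 0
          · exact hw.1 b
        · rw [sum_lex_decomp]
          calc ∑ a ∈ s.toLeft, Sum.elim (fun _ => (0:ℝ)) w (inl a) + ∑ b ∈ s.toRight, w b
                = ∑ b ∈ s.toRight, w b := by simp
            _ ≤ 1 := hw.2 s.toRight (chain_toRight A B s hs)
        · ext p
          · rfl
          · rfl
    · have hlin : IsLinearMap ℝ (fun x : (A ⊕ₗ B) → ℝ =>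
          ((fun a : A => x (toLex (Sum.inl a))), (fun b : B => x (toLex (Sum.inr b))))) :=
        ⟨fun x y => rfl, fun c x => rfl⟩
      exact (aux_chainPolytope_convex (A ⊕ₗ B)).is_linear_image hlin

end AuxLex

/-- `O(A<B) ≅ O(A) ∨ O(B^op)` (combinatorial isomorphism of face lattices)
and `C(A<B) = C(A) ∨ C(B)` under the canonical identification of coordinates.
Here the ordinal sum `A < B` is the lexicographic sum `A ⊕ₗ B`. -/
theorem ordinal_sum_polytopes (A B : Type*) [Fintype A] [PartialOrder A]
    [Fintype B] [PartialOrder B] :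
    Nonempty ({F : Set ((A ⊕ₗ B) → ℝ) // IsFaceOf F (orderPolytope (A ⊕ₗ B))} ≃o
      {F : Set ((A → ℝ) × (Bᵒᵈ → ℝ)) //
        IsFaceOf F (subdirectSum (orderPolytope A) (orderPolytope Bᵒᵈ))}) ∧
    (fun x : (A ⊕ₗ B) → ℝ =>
        ((fun a : A => x (toLex (Sum.inl a))), (fun b : B => x (toLex (Sum.inr b))))) ''
      chainPolytope (A ⊕ₗ B) = subdirectSum (chainPolytope A) (chainPolytope B) := by
  constructor
  · refine ⟨?_⟩
    have h := orderPolytope_image A B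
    rw [← h]
    exact auxFaceOrderIso (lexAffEquiv A B) (orderPolytope (A ⊕ₗ B))
  · exact chainPolytope_image A B
end

section
/- Suppose nonnegative-coefficient polynomials α_A, β_A, γ_A, δ_A and α_B, β_B, γ_B, δ_B satisfy, for S ∈ {A, B}: 0 ≤ x(β_S − α_S) ≤ δ_S − γ_S (coefficient-wise) and 0 ≤ α_S ≤ β_S ≤ γ_S ≤ δ_S (coefficient-wise). Then x·β_A·β_B + γ_A·γ_B ≤ x·α_A·α_B + δ_A·δ_B coefficient-wise. -/
/-!
The gap between the two sides splits into two coefficient-wise nonnegative polynomials,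
`(X aA aB + dA dB) - (X bA bB + cA cB)
  = (cA (dB - cB) - aA · X (bB - aB)) + ((dA - cA) dB - X (bA - aA) · bB)`,
and each bracket is nonnegative because the product of coefficient-wise nonnegative polynomials is
coefficient-wise monotone in each factor: `aA ≤ cA`, `X (bB - aB) ≤ dB - cB`,
`X (bA - aA) ≤ dA - cA` and `bB ≤ dB`.
-/

open Polynomial

theorem Polynomial.coeff_mul_le_coeff_mul {R : Type*} [Semiring R] [PartialOrder R]
    [IsOrderedRing R] {p p' q q' : R[X]}
    (hp : ∀ n, 0 ≤ p.coeff n) (hpp' : ∀ n, p.coeff n ≤ p'.coeff n)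
    (hq : ∀ n, 0 ≤ q.coeff n) (hqq' : ∀ n, q.coeff n ≤ q'.coeff n) (n : ℕ) :
    (p * q).coeff n ≤ (p' * q').coeff n := by
  rw [coeff_mul, coeff_mul]
  exact Finset.sum_le_sum fun i _ =>
    mul_le_mul (hpp' i.1) (hqq' i.2) (hq i.2) ((hp i.1).trans (hpp' i.1))

/-- the key coefficient-wise polynomial inequality for the ordinal-sum step. -/
theorem key_polynomial_inequality (aA bA cA dA aB bB cB dB : Polynomial ℤ)
    (hposA : ∀ n, 0 ≤ aA.coeff n ∧ 0 ≤ bA.coeff n ∧ 0 ≤ cA.coeff n ∧ 0 ≤ dA.coeff n)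
    (hposB : ∀ n, 0 ≤ aB.coeff n ∧ 0 ≤ bB.coeff n ∧ 0 ≤ cB.coeff n ∧ 0 ≤ dB.coeff n)
    (h1A : ∀ n, 0 ≤ (X * (bA - aA)).coeff n ∧ (X * (bA - aA)).coeff n ≤ (dA - cA).coeff n)
    (h1B : ∀ n, 0 ≤ (X * (bB - aB)).coeff n ∧ (X * (bB - aB)).coeff n ≤ (dB - cB).coeff n)
    (h2A : ∀ n, aA.coeff n ≤ bA.coeff n ∧ bA.coeff n ≤ cA.coeff n ∧ cA.coeff n ≤ dA.coeff n)
    (h2B : ∀ n, aB.coeff n ≤ bB.coeff n ∧ bB.coeff n ≤ cB.coeff n ∧ cB.coeff n ≤ dB.coeff n) :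
    ∀ n, (X * bA * bB + cA * cB).coeff n ≤ (X * aA * aB + dA * dB).coeff n := by
  intro n
  have gapA : (aA * (X * (bB - aB))).coeff n ≤ (cA * (dB - cB)).coeff n :=
    coeff_mul_le_coeff_mul (fun m => (hposA m).1) (fun m => (h2A m).1.trans (h2A m).2.1)
      (fun m => (h1B m).1) (fun m => (h1B m).2) n
  have gapB : (X * (bA - aA) * bB).coeff n ≤ ((dA - cA) * dB).coeff n :=
    coeff_mul_le_coeff_mul (fun m => (h1A m).1) (fun m => (h1A m).2)
      (fun m => (hposB m).2.1) (fun m => (h2B m).2.1.trans (h2B m).2.2) n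
  have split : X * aA * aB + dA * dB = X * bA * bB + cA * cB
      + (cA * (dB - cB) - aA * (X * (bB - aB))) + ((dA - cA) * dB - X * (bA - aA) * bB) := by
    ring
  rw [split]
  simp only [coeff_add, coeff_sub]
  linarith
end
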